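/- Let (A, μ, σ) be a braided algebra, i.e., an associative algebra with a Yang–Baxter operator σ on A⊗A satisfying (μ⊗id)σ₂σ₁ = σ(id⊗μ) and (id⊗μ)σ₁σ₂ = σ(μ⊗id). If A is unital with σ(a⊗1) = 1⊗a and σ(1⊗a) = a⊗1 for all a, then A⊗A equipped with the product (a⊗b)(a'⊗b') := Σ (a a'')⊗(b'' b'), where σ(b⊗a') = Σ a''⊗b'', is again a unital associative algebra. -/
import Mathlib


open TensorProduct LinearMap
set_option synthInstance.maxHeartbeats 1000000
set_option maxHeartbeats 1000000
set_option linter.unusedSectionVars false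

noncomputable section

variable (k : Type*) [Field k] [CharZero k]
variable (A : Type*) [Ring A] [Algebra k A]

/-- `σ₁ = σ ⊗ id` on `A^{⊗3} = A ⊗ (A ⊗ A)`. -/
def sig1 (σ : A ⊗[k] A →ₗ[k] A ⊗[k] A) :
    A ⊗[k] (A ⊗[k] A) →ₗ[k] A ⊗[k] (A ⊗[k] A) :=
  (TensorProduct.assoc k A A A).toLinearMap ∘ₗ rTensor A σ ∘ₗ
    (TensorProduct.assoc k A A A).symm.toLinearMap

/-- `σ₂ = id ⊗ σ` on `A^{⊗3}`. -/
def sig2 (σ : A ⊗[k] A →ₗ[k] A ⊗[k] A) :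
    A ⊗[k] (A ⊗[k] A) →ₗ[k] A ⊗[k] (A ⊗[k] A) :=
  lTensor A σ

/-- `μ ⊗ id : A^{⊗3} → A^{⊗2}` for the multiplication `μ` of `A`. -/
def mulFst : A ⊗[k] (A ⊗[k] A) →ₗ[k] A ⊗[k] A :=
  rTensor A (LinearMap.mul' k A) ∘ₗ (TensorProduct.assoc k A A A).symm.toLinearMap

/-- `id ⊗ σ ⊗ id` applied to the middle two factors of `(A⊗A) ⊗ (A⊗A)`:
`a ⊗ b ⊗ a' ⊗ b' ↦ Σ a ⊗ a'' ⊗ b'' ⊗ b'` where `σ(b ⊗ a') = Σ a'' ⊗ b''`. -/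
def sigMid (σ : A ⊗[k] A →ₗ[k] A ⊗[k] A) :
    (A ⊗[k] A) ⊗[k] (A ⊗[k] A) →ₗ[k] (A ⊗[k] A) ⊗[k] (A ⊗[k] A) :=
  (TensorProduct.assoc k (A ⊗[k] A) A A).toLinearMap ∘ₗ
    rTensor A ((TensorProduct.assoc k A A A).symm.toLinearMap ∘ₗ
      lTensor A σ ∘ₗ (TensorProduct.assoc k A A A).toLinearMap) ∘ₗ
    (TensorProduct.assoc k (A ⊗[k] A) A A).symm.toLinearMap

/-- The product on `A ⊗ A`: `(a⊗b)(a'⊗b') := Σ (a a'') ⊗ (b'' b')` where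
`σ(b ⊗ a') = Σ a'' ⊗ b''`, i.e. `(μ ⊗ μ) ∘ σ₂` on `(A⊗A) ⊗ (A⊗A)`. -/
def mulTwist (σ : A ⊗[k] A →ₗ[k] A ⊗[k] A) :
    (A ⊗[k] A) ⊗[k] (A ⊗[k] A) →ₗ[k] A ⊗[k] A :=
  TensorProduct.map (LinearMap.mul' k A) (LinearMap.mul' k A) ∘ₗ sigMid k A σ

lemma sig1_apply (σ : A ⊗[k] A →ₗ[k] A ⊗[k] A) (q r s : A) :
    sig1 k A σ (q ⊗ₜ (r ⊗ₜ s)) = (TensorProduct.assoc k A A A) (σ (q ⊗ₜ r) ⊗ₜ s) := by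
  simp [sig1]

lemma mulFst_tmul (x y z : A) : mulFst k A (x ⊗ₜ (y ⊗ₜ z)) = (x*y) ⊗ₜ z := by
  simp [mulFst, mul'_apply]

lemma mulTwist_tmul (σ : A ⊗[k] A →ₗ[k] A ⊗[k] A) (a b c d : A) :
    mulTwist k A σ ((a ⊗ₜ b) ⊗ₜ (c ⊗ₜ d)) =
      TensorProduct.map (mulLeft k a) (mulRight k d) (σ (b ⊗ₜ c)) := by
  simp only [mulTwist, sigMid, coe_comp, Function.comp_apply, LinearEquiv.coe_coe,
    assoc_symm_tmul, assoc_tmul, rTensor_tmul, lTensor_tmul]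
  generalize σ (b ⊗ₜ c) = u
  induction u using TensorProduct.induction_on with
  | zero => simp only [tmul_zero, zero_tmul, map_zero]
  | tmul p q => simp [mul'_apply]
  | add x y hx hy => simp only [tmul_add, add_tmul, map_add, hx, hy]

lemma lemB (σ : A ⊗[k] A →ₗ[k] A ⊗[k] A)
    (hba2 : lTensor A (LinearMap.mul' k A) ∘ₗ sig1 k A σ ∘ₗ sig2 k A σ
          = σ ∘ₗ mulFst k A) (q d e : A) :
    σ ((q * d) ⊗ₜ e) = lTensor A (mul' k A) (sig1 k A σ (q ⊗ₜ σ (d ⊗ₜ e))) := by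
  have h := LinearMap.congr_fun hba2 (q ⊗ₜ (d ⊗ₜ e))
  simp only [coe_comp, Function.comp_apply, sig2, lTensor_tmul, mulFst,
    LinearEquiv.coe_coe, assoc_symm_tmul, rTensor_tmul, mul'_apply] at h
  exact h.symm

lemma lemC (σ : A ⊗[k] A →ₗ[k] A ⊗[k] A)
    (hba1 : mulFst k A ∘ₗ sig2 k A σ ∘ₗ sig1 k A σ
          = σ ∘ₗ lTensor A (LinearMap.mul' k A)) (b c r : A) :
    σ (b ⊗ₜ (c * r)) = mulFst k A (sig2 k A σ (sig1 k A σ (b ⊗ₜ (c ⊗ₜ r)))) := by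
  have h := LinearMap.congr_fun hba1 (b ⊗ₜ (c ⊗ₜ r))
  simp only [coe_comp, Function.comp_apply, lTensor_tmul, mul'_apply] at h
  exact h.symm

lemma keyL (σ : A ⊗[k] A →ₗ[k] A ⊗[k] A)
    (hba2 : lTensor A (LinearMap.mul' k A) ∘ₗ sig1 k A σ ∘ₗ sig2 k A σ
          = σ ∘ₗ mulFst k A) (a b c d e f : A) :
    mulTwist k A σ (mulTwist k A σ ((a ⊗ₜ b) ⊗ₜ (c ⊗ₜ d)) ⊗ₜ (e ⊗ₜ f))
      = TensorProduct.map (mulLeft k a) (mulRight k f)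
          (mulTwist k A σ (σ (b ⊗ₜ c) ⊗ₜ σ (d ⊗ₜ e))) := by
  rw [mulTwist_tmul]
  generalize σ (b ⊗ₜ c) = u
  induction u using TensorProduct.induction_on with
  | zero => simp only [map_zero, zero_tmul, map_zero]
  | add x y hx hy => simp only [map_add, add_tmul, hx, hy]
  | tmul p q =>
    rw [map_tmul, mulLeft_apply, mulRight_apply, mulTwist_tmul,
      lemB k A σ hba2]
    generalize σ (d ⊗ₜ e) = w
    induction w using TensorProduct.induction_on with
    | zero => simp only [tmul_zero, map_zero]
    | add x y hx hy => simp only [tmul_add, map_add, hx, hy]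
    | tmul r s =>
      rw [sig1_apply, mulTwist_tmul]
      generalize σ (q ⊗ₜ r) = v
      induction v using TensorProduct.induction_on with
      | zero => simp only [zero_tmul, map_zero, tmul_zero]
      | add x y hx hy => simp only [add_tmul, map_add, tmul_add, hx, hy]
      | tmul t u =>
        simp only [assoc_tmul, lTensor_tmul, mul'_apply, map_tmul,
          mulLeft_apply, mulRight_apply, mul_assoc]

lemma keyR (σ : A ⊗[k] A →ₗ[k] A ⊗[k] A)
    (hba1 : mulFst k A ∘ₗ sig2 k A σ ∘ₗ sig1 k A σ
          = σ ∘ₗ lTensor A (LinearMap.mul' k A)) (a b c d e f : A) :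
    mulTwist k A σ ((a ⊗ₜ b) ⊗ₜ mulTwist k A σ ((c ⊗ₜ d) ⊗ₜ (e ⊗ₜ f)))
      = TensorProduct.map (mulLeft k a) (mulRight k f)
          (mulTwist k A σ (σ (b ⊗ₜ c) ⊗ₜ σ (d ⊗ₜ e))) := by
  rw [mulTwist_tmul k A σ c d e f]
  generalize σ (d ⊗ₜ e) = w
  induction w using TensorProduct.induction_on with
  | zero => simp only [map_zero, tmul_zero, map_zero]
  | add x y hx hy => simp only [map_add, tmul_add, hx, hy]
  | tmul r s =>
    rw [map_tmul, mulLeft_apply, mulRight_apply, mulTwist_tmul,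
      lemC k A σ hba1, sig1_apply]
    generalize σ (b ⊗ₜ c) = u
    induction u using TensorProduct.induction_on with
    | zero => simp only [zero_tmul, map_zero, tmul_zero]
    | add x y hx hy => simp only [add_tmul, map_add, tmul_add, hx, hy]
    | tmul p q =>
      rw [assoc_tmul, sig2, lTensor_tmul, mulTwist_tmul]
      generalize σ (q ⊗ₜ r) = v
      induction v using TensorProduct.induction_on with
      | zero => simp only [tmul_zero, map_zero]
      | add x y hx hy => simp only [tmul_add, map_add, hx, hy]
      | tmul t u =>
        simp only [mulFst_tmul, map_tmul, mulLeft_apply, mulRight_apply, mul_assoc]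

/-- Let `(A, μ, σ)` be a unital braided algebra: `σ` satisfies
the Yang–Baxter equation and the compatibilities `(μ⊗id)σ₂σ₁ = σ(id⊗μ)`,
`(id⊗μ)σ₁σ₂ = σ(μ⊗id)`, `σ(a⊗1) = 1⊗a`, `σ(1⊗a) = a⊗1`. Then `A ⊗ A` with the
product `(a⊗b)(a'⊗b') := Σ (a a'') ⊗ (b'' b')`, where `σ(b⊗a') = Σ a''⊗b''`,
is again a unital associative algebra (with unit `1 ⊗ 1`). -/
theorem braided_tensor_square_algebra (σ : A ⊗[k] A →ₗ[k] A ⊗[k] A)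
    (hYB : sig1 k A σ ∘ₗ sig2 k A σ ∘ₗ sig1 k A σ
         = sig2 k A σ ∘ₗ sig1 k A σ ∘ₗ sig2 k A σ)
    (hba1 : mulFst k A ∘ₗ sig2 k A σ ∘ₗ sig1 k A σ
          = σ ∘ₗ lTensor A (LinearMap.mul' k A))
    (hba2 : lTensor A (LinearMap.mul' k A) ∘ₗ sig1 k A σ ∘ₗ sig2 k A σ
          = σ ∘ₗ mulFst k A)
    (hu1 : ∀ a : A, σ (a ⊗ₜ (1 : A)) = (1 : A) ⊗ₜ a)
    (hu2 : ∀ a : A, σ ((1 : A) ⊗ₜ a) = a ⊗ₜ (1 : A)) :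
    (mulTwist k A σ ∘ₗ rTensor (A ⊗[k] A) (mulTwist k A σ)
       = mulTwist k A σ ∘ₗ lTensor (A ⊗[k] A) (mulTwist k A σ) ∘ₗ
           (TensorProduct.assoc k (A ⊗[k] A) (A ⊗[k] A) (A ⊗[k] A)).toLinearMap) ∧
    (∀ x : A ⊗[k] A,
      mulTwist k A σ (((1 : A) ⊗ₜ (1 : A)) ⊗ₜ x) = x ∧
      mulTwist k A σ (x ⊗ₜ ((1 : A) ⊗ₜ (1 : A))) = x) := by
  constructor
  · apply TensorProduct.ext'
    intro w z
    simp only [coe_comp, Function.comp_apply, LinearEquiv.coe_coe]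
    induction w using TensorProduct.induction_on with
    | zero => simp only [zero_tmul, map_zero]
    | add x y hx hy => simp only [add_tmul, map_add, hx, hy]
    | tmul x y =>
      simp only [rTensor_tmul, assoc_tmul, lTensor_tmul]
      induction x using TensorProduct.induction_on with
      | zero => simp only [zero_tmul, map_zero, tmul_zero]
      | add x1 x2 h1 h2 => simp only [add_tmul, map_add, h1, h2]
      | tmul a b =>
        induction y using TensorProduct.induction_on with
        | zero => simp only [zero_tmul, tmul_zero, map_zero]
        | add y1 y2 h1 h2 => simp only [add_tmul, tmul_add, map_add, h1, h2]
        | tmul c d =>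
          induction z using TensorProduct.induction_on with
          | zero => simp only [tmul_zero, map_zero]
          | add z1 z2 h1 h2 => simp only [tmul_add, map_add, h1, h2]
          | tmul e f =>
            rw [keyL k A σ hba2 a b c d e f, keyR k A σ hba1 a b c d e f]
  · intro x
    constructor
    · induction x using TensorProduct.induction_on with
      | zero => simp only [tmul_zero, map_zero]
      | add x y hx hy => simp only [tmul_add, map_add, hx, hy]
      | tmul a b =>
        rw [mulTwist_tmul, hu2, map_tmul, mulLeft_apply, mulRight_apply]
        rw [one_mul, one_mul]
    · induction x using TensorProduct.induction_on with
      | zero => simp only [zero_tmul, map_zero]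
      | add x y hx hy => simp only [add_tmul, map_add, hx, hy]
      | tmul a b =>
        rw [mulTwist_tmul, hu1, map_tmul, mulLeft_apply, mulRight_apply]
        rw [mul_one, mul_one]

end
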